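/- arXiv:1202.1976 — 3 statements merged into one kernel-verified Lean document; each statement's English description precedes it below -/
import Mathlib

section
/- For all nonnegative integers n, reals a, b, β, and α > 0, one has ∫_{-∞}^{∞} (a x + b)^n exp(-α x² + β x) dx = √(π/α) · exp(β²/(4α)) · H_n(b + aβ/(2α), a²/(4α)), where H_n is the two-variable Hermite polynomial. -/
open Real MeasureTheory Finset Nat

/-- Two-variable Hermite polynomial `H_n(x,y)`. -/
noncomputable def H2v (n : ℕ) (x y : ℝ) : ℝ :=
  (n ! : ℝ) * ∑ k ∈ Finset.range (n / 2 + 1),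
    x ^ (n - 2 * k) * y ^ k / (((n - 2 * k)! : ℝ) * (k ! : ℝ))

/-!
Completing the square, `-α x² + β x = -α (x - β/(2α))² + β²/(4α)`, and translating by
`β/(2α)` reduce the integral to `e^{β²/(4α)} ∫ (a x + c)ⁿ e^{-α x²} dx` with
`c = b + aβ/(2α)`. Expanding binomially, the odd Gaussian moments vanish and the even ones are
`∫ x^{2k} e^{-α x²} dx = √(π/α) (2k)! / (k! (4α)^k)`, so the `x^{2k}` term contributes
`√(π/α) n! c^{n-2k} (a²/(4α))^k / ((n-2k)! k!)`, the `k`-th term of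
`√(π/α) H_n(c, a²/(4α))`.
-/

theorem Nat.factorial_two_mul_eq_mul_doubleFactorial (k : ℕ) :
    (2 * k)! = 2 ^ k * k ! * (2 * k - 1)‼ := by
  cases k with
  | zero => rfl
  | succ k =>
    rw [show 2 * (k + 1) = 2 * k + 1 + 1 by ring, factorial_eq_mul_doubleFactorial,
      show 2 * k + 1 + 1 = 2 * (k + 1) by ring, doubleFactorial_two_mul]
    rfl

theorem Function.Odd.integral_eq_zero {G E : Type*} [MeasurableSpace G] [AddGroup G]
    [MeasurableNeg G] [NormedAddCommGroup E] [NormedSpace ℝ E] {f : G → E} (hf : Function.Odd f)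
    (μ : Measure G) [μ.IsNegInvariant] : ∫ x, f x ∂μ = 0 := by
  have h := integral_neg_eq_self f μ
  simp only [hf _, integral_neg] at h
  rw [eq_comm, ← sub_eq_zero, sub_neg_eq_add, ← two_smul ℝ] at h
  exact (smul_eq_zero.mp h).resolve_left two_ne_zero

theorem integral_pow_two_mul_add_one_mul_exp_neg_mul_sq (b : ℝ) (k : ℕ) :
    ∫ x : ℝ, x ^ (2 * k + 1) * exp (-b * x ^ 2) = 0 :=
  Function.Odd.integral_eq_zero (fun x => by simp [Odd.neg_pow (odd_two_mul_add_one k)]) volume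

theorem integrable_pow_mul_exp_neg_mul_sq {b : ℝ} (hb : 0 < b) (m : ℕ) :
    Integrable fun x : ℝ => x ^ m * exp (-b * x ^ 2) := by
  simpa using
    integrable_rpow_mul_exp_neg_mul_sq hb (s := m) (by linarith [m.cast_nonneg (α := ℝ)])

theorem integral_pow_two_mul_mul_exp_neg_mul_sq {b : ℝ} (hb : 0 < b) (k : ℕ) :
    ∫ x : ℝ, x ^ (2 * k) * exp (-b * x ^ 2) = √(π / b) * (2 * k)! / (k ! * (4 * b) ^ k) := by
  have heven (x : ℝ) : x ^ (2 * k) * exp (-b * x ^ 2) = |x| ^ (2 * k) * exp (-b * |x| ^ 2) := by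
    rw [pow_mul, pow_mul, sq_abs]
  have hhalf : ∫ x in Set.Ioi (0 : ℝ), x ^ (2 * k) * exp (-b * x ^ 2) =
      (b ^ k)⁻¹ * (√b)⁻¹ * (1 / 2) * Gamma (k + 1 / 2) := by
    have h := integral_rpow_mul_exp_neg_mul_rpow (p := 2) (q := 2 * k) two_pos
      (by linarith [k.cast_nonneg (α := ℝ)]) hb
    rw [show (-((2 * k : ℝ) + 1) / 2) = -(k + 1 / 2 : ℝ) by ring,
      show ((2 * k : ℝ) + 1) / 2 = k + 1 / 2 by ring, rpow_neg hb.le, rpow_add hb, rpow_natCast,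
      ← sqrt_eq_rpow, mul_inv] at h
    rw [← h]
    norm_cast
  rw [integral_congr_ae (ae_of_all _ heven),
    integral_comp_abs (f := fun x => x ^ (2 * k) * exp (-b * x ^ 2)), hhalf, Gamma_nat_add_half,
    factorial_two_mul_eq_mul_doubleFactorial, sqrt_div pi_pos.le]
  push_cast
  field_simp
  rw [mul_pow, ← pow_mul, mul_comm k 2, pow_mul]
  norm_num [mul_comm]

theorem Finset.sum_range_succ_eq_sum_two_mul_of_odd_eq_zero {M : Type*} [AddCommMonoid M]
    {f : ℕ → M} (hf : ∀ k, f (2 * k + 1) = 0) (n : ℕ) :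
    ∑ j ∈ range (n + 1), f j = ∑ k ∈ range (n / 2 + 1), f (2 * k) := by
  have hsub : (range (n / 2 + 1)).image (2 * ·) ⊆ range (n + 1) := by
    intro j
    simp only [mem_image, mem_range]
    omega
  rw [← sum_image fun _ _ _ _ => Nat.eq_of_mul_eq_mul_left two_pos, sum_subset hsub]
  intro j hj hjn
  obtain ⟨k, rfl | rfl⟩ := j.even_or_odd'
  · simp only [mem_image, mem_range, not_exists, not_and] at hj hjn
    exact absurd rfl (hjn k (by omega))
  · exact hf k

theorem integral_add_pow_mul_exp_neg_mul_sq_eq_sum {b : ℝ} (hb : 0 < b) (n : ℕ) (a c : ℝ) :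
    ∫ x : ℝ, (a * x + c) ^ n * exp (-b * x ^ 2) =
      ∑ j ∈ range (n + 1),
        n.choose j * a ^ j * c ^ (n - j) * ∫ x : ℝ, x ^ j * exp (-b * x ^ 2) := by
  simp_rw [← integral_const_mul]
  rw [← integral_finsetSum _ fun j _ => (integrable_pow_mul_exp_neg_mul_sq hb j).const_mul _]
  congr 1 with x
  rw [add_pow, sum_mul]
  exact sum_congr rfl fun j _ => by ring

theorem integral_add_pow_mul_exp_neg_mul_sq {b : ℝ} (hb : 0 < b) (n : ℕ) (a c : ℝ) :
    ∫ x : ℝ, (a * x + c) ^ n * exp (-b * x ^ 2) = √(π / b) * H2v n c (a ^ 2 / (4 * b)) := by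
  rw [integral_add_pow_mul_exp_neg_mul_sq_eq_sum hb,
    sum_range_succ_eq_sum_two_mul_of_odd_eq_zero fun k => by
      rw [integral_pow_two_mul_add_one_mul_exp_neg_mul_sq, mul_zero],
    H2v, mul_sum, mul_sum]
  refine sum_congr rfl fun k hk => ?_
  have hkn : 2 * k ≤ n := by rw [mem_range] at hk; omega
  rw [integral_pow_two_mul_mul_exp_neg_mul_sq hb, cast_choose ℝ hkn, pow_mul, div_pow]
  field_simp

theorem integral_mul_exp_neg_mul_sq_add_mul {α : ℝ} (hα : α ≠ 0) (β : ℝ) (f : ℝ → ℝ) :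
    ∫ x, f x * exp (-α * x ^ 2 + β * x) =
      exp (β ^ 2 / (4 * α)) * ∫ x, f (x + β / (2 * α)) * exp (-α * x ^ 2) := by
  rw [← integral_add_right_eq_self (fun x => f x * exp (-α * x ^ 2 + β * x)) (β / (2 * α)),
    ← integral_const_mul]
  congr 1 with x
  rw [mul_left_comm, ← exp_add]
  congr 2
  field_simp
  ring

theorem gaussian_integral_binomial_power (n : ℕ) (a b β α : ℝ) (hα : 0 < α) :
    ∫ x : ℝ, (a * x + b) ^ n * Real.exp (-α * x ^ 2 + β * x) =
      Real.sqrt (π / α) * Real.exp (β ^ 2 / (4 * α)) *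
        H2v n (b + a * β / (2 * α)) (a ^ 2 / (4 * α)) := by
  have hshift (x : ℝ) : a * (x + β / (2 * α)) + b = a * x + (b + a * β / (2 * α)) := by ring
  rw [integral_mul_exp_neg_mul_sq_add_mul hα.ne' β (fun x => (a * x + b) ^ n)]
  simp only [hshift, integral_add_pow_mul_exp_neg_mul_sq hα]
  ring
end

section
/- For all nonnegative integers m, n, reals a, b, f, g, and α > 0: ∫_{-∞}^{∞} (a x + b)^m (f x + g)^n exp(-α x²) dx = √(π/α) · H_{m,n}(b, a²/(4α); g, f²/(4α) | a f/(2α)), where H_{m,n}(x,y;w,z|τ) = m! n! ∑_{k=0}^{min(m,n)} τ^k H_{m-k}(x,y) H_{n-k}(w,z) / ((m-k)! (n-k)! k!). -/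
/-! Both sides satisfy the same recurrence in `(m, n)` and agree at `(0, 0)`, where the integral
is `√(π/α)`. For the integral `I m n`, Gaussian integration by parts
`∫ x u e^{-αx²} = (2α)⁻¹ ∫ u' e^{-αx²}` with `u = (ax+b)^m (fx+g)^n` gives
`I (m+1) n = b I m n + (a²/2α) m I (m-1) n + (af/2α) n I m (n-1)`, and the column `m = 0` follows
by exchanging the two linear factors. For `H_{m,n}` the same recurrence comes from writing the
coefficient `m! n! / ((m-k)! (n-k)! k!)` as `C(m,k) C(n,k) k!`, applying Pascal's rule to
`C(m+1,k)` and `H_{j+1}(x,y) = x H_j(x,y) + 2 y j H_{j-1}(x,y)`. -/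

open Real MeasureTheory Finset Nat

/-- Two-index Hermite polynomial `H_{m,n}(x,y;w,z|τ)`. -/
noncomputable def H2idx (m n : ℕ) (x y w z τ : ℝ) : ℝ :=
  (m ! : ℝ) * (n ! : ℝ) * ∑ k ∈ Finset.range (min m n + 1),
    τ ^ k * H2v (m - k) x y * H2v (n - k) w z /
      (((m - k)! : ℝ) * ((n - k)! : ℝ) * (k ! : ℝ))

-- `(2k).descFactorial k = (2k)! / k!`, so this is `n! / ((n-2k)! k!)` when `2k ≤ n` and `0` beyond.
def H2vCoeff (n k : ℕ) : ℕ := n.choose (2 * k) * (2 * k).descFactorial k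

lemma descFactorial_two_mul_succ (k : ℕ) :
    (2 * (k + 1)).descFactorial (k + 1) = 2 * (2 * k + 1) * (2 * k).descFactorial k := by
  have h₁ := Nat.succ_descFactorial_succ (2 * k + 1) k
  have h₂ := Nat.succ_descFactorial (2 * k) k
  rw [show 2 * k + 1 - k = k + 1 by omega] at h₂
  apply Nat.eq_of_mul_eq_mul_left (show 0 < k + 1 by omega)
  rw [show 2 * (k + 1) = 2 * k + 1 + 1 by ring, h₁]
  linear_combination (2 * k + 2) * h₂

lemma H2vCoeff_succ_succ (n k : ℕ) :
    H2vCoeff (n + 2) (k + 1) = H2vCoeff (n + 1) (k + 1) + 2 * (n + 1) * H2vCoeff n k := by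
  have h := (Nat.add_one_mul_choose_eq n (2 * k)).symm
  simp only [H2vCoeff, descFactorial_two_mul_succ]
  rw [show 2 * (k + 1) = 2 * k + 1 + 1 by ring, Nat.choose_succ_succ' (n + 1)]
  linear_combination (2 * (2 * k).descFactorial k) * h

lemma H2vCoeff_eq_zero_of_lt {n k : ℕ} (h : n < 2 * k) : H2vCoeff n k = 0 := by
  simp [H2vCoeff, Nat.choose_eq_zero_of_lt h]

lemma H2vCoeff_mul_factorial_mul_factorial {n k : ℕ} (h : 2 * k ≤ n) :
    H2vCoeff n k * ((n - 2 * k)! * k !) = n ! := by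
  have h₁ := Nat.factorial_mul_descFactorial (show k ≤ 2 * k by omega)
  rw [show 2 * k - k = k by omega] at h₁
  rw [← Nat.choose_mul_factorial_mul_factorial h, H2vCoeff, ← h₁]
  ring

lemma H2v_eq_sum_range {n N : ℕ} (hN : n / 2 < N) (x y : ℝ) :
    H2v n x y = ∑ k ∈ range N, (H2vCoeff n k : ℝ) * x ^ (n - 2 * k) * y ^ k := by
  have hzero : ∀ k ≥ n / 2 + 1, (H2vCoeff n k : ℝ) * x ^ (n - 2 * k) * y ^ k = 0 := fun k hk => by
    simp [H2vCoeff_eq_zero_of_lt (show n < 2 * k by omega)]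
  rw [Finset.eventually_constant_sum hzero hN, H2v, Finset.mul_sum]
  refine Finset.sum_congr rfl fun k hk => ?_
  have h := H2vCoeff_mul_factorial_mul_factorial (n := n) (k := k) (by simp at hk; omega)
  rw [← h]
  push_cast
  field_simp

lemma H2v_succ_succ (n : ℕ) (x y : ℝ) :
    H2v (n + 2) x y = x * H2v (n + 1) x y + 2 * y * (n + 1) * H2v n x y := by
  rw [H2v_eq_sum_range (N := n + 3) (by omega),
    H2v_eq_sum_range (n := n + 1) (N := n + 3) (by omega),
    H2v_eq_sum_range (n := n) (N := n + 2) (by omega), sum_range_succ', sum_range_succ' _ (n + 2),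
    mul_add, mul_sum, mul_sum]
  have hterm : ∀ k, (H2vCoeff (n + 2) (k + 1) : ℝ) * x ^ (n + 2 - 2 * (k + 1)) * y ^ (k + 1) =
      x * ((H2vCoeff (n + 1) (k + 1) : ℝ) * x ^ (n + 1 - 2 * (k + 1)) * y ^ (k + 1)) +
        2 * y * (n + 1) * ((H2vCoeff n k : ℝ) * x ^ (n - 2 * k) * y ^ k) := by
    intro k
    rw [H2vCoeff_succ_succ, show n + 2 - 2 * (k + 1) = n - 2 * k by omega]
    rcases lt_or_ge n (2 * k + 1) with h | h
    · rw [H2vCoeff_eq_zero_of_lt (n := n + 1) (by omega)]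
      push_cast; ring
    · rw [show n - 2 * k = n + 1 - 2 * (k + 1) + 1 by omega]
      push_cast; ring
  rw [sum_congr rfl fun k _ => hterm k, sum_add_distrib]
  simp only [H2vCoeff, Nat.choose_zero_right, mul_zero, Nat.descFactorial_zero]
  push_cast
  ring

lemma H2v_succ (n : ℕ) (x y : ℝ) :
    H2v (n + 1) x y = x * H2v n x y + 2 * y * n * H2v (n - 1) x y := by
  cases n with
  | zero => simp [H2v]
  | succ n => rw [H2v_succ_succ]; push_cast; rfl

noncomputable def H2idxTerm (m n k : ℕ) (x y w z τ : ℝ) : ℝ :=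
  (m.choose k * n.choose k * k ! : ℕ) * τ ^ k * H2v (m - k) x y * H2v (n - k) w z

lemma H2idx_eq_sum_range {m n N : ℕ} (hN : min m n < N) (x y w z τ : ℝ) :
    H2idx m n x y w z τ = ∑ k ∈ range N, H2idxTerm m n k x y w z τ := by
  have hzero : ∀ k ≥ min m n + 1, H2idxTerm m n k x y w z τ = 0 := fun k hk => by
    rcases le_or_gt m n with h | h
    · simp [H2idxTerm, Nat.choose_eq_zero_of_lt (show m < k by omega)]
    · simp [H2idxTerm, Nat.choose_eq_zero_of_lt (show n < k by omega)]
  rw [Finset.eventually_constant_sum hzero hN, H2idx, Finset.mul_sum]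
  refine Finset.sum_congr rfl fun k hk => ?_
  have hkm : k ≤ m := by simp at hk; omega
  have hkn : k ≤ n := by simp at hk; omega
  have h : (m.choose k * n.choose k * k ! : ℕ) * ((m - k)! * (n - k)! * k !) = m ! * n ! := by
    rw [← Nat.choose_mul_factorial_mul_factorial hkm, ← Nat.choose_mul_factorial_mul_factorial hkn]
    ring
  rw [H2idxTerm, ← Nat.cast_mul, ← h]
  push_cast
  field_simp

lemma H2idxTerm_succ_zero (m n : ℕ) (x y w z τ : ℝ) :
    H2idxTerm (m + 1) n 0 x y w z τ =
      x * H2idxTerm m n 0 x y w z τ + 2 * y * m * H2idxTerm (m - 1) n 0 x y w z τ := by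
  simp only [H2idxTerm, H2v_succ, Nat.choose_zero_right, Nat.sub_zero]
  push_cast
  ring

lemma H2idxTerm_succ_succ (m n k : ℕ) (x y w z τ : ℝ) :
    H2idxTerm (m + 1) n (k + 1) x y w z τ =
      x * H2idxTerm m n (k + 1) x y w z τ + 2 * y * m * H2idxTerm (m - 1) n (k + 1) x y w z τ +
        τ * n * H2idxTerm m (n - 1) k x y w z τ := by
  have hn : (n.choose (k + 1) * (k + 1) : ℝ) = n * (n - 1).choose k := by
    rcases n with _ | n
    · simp
    · exact_mod_cast (Nat.add_one_mul_choose_eq n k).symm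
  have hm : (m.choose (k + 1) : ℝ) * H2v (m - k) x y =
      x * (m.choose (k + 1) * H2v (m - (k + 1)) x y) +
        2 * y * m * ((m - 1).choose (k + 1) * H2v (m - 1 - (k + 1)) x y) := by
    rcases lt_or_ge m (k + 1) with h | h
    · simp [Nat.choose_eq_zero_of_lt h, Nat.choose_eq_zero_of_lt (show m - 1 < k + 1 by omega)]
    · obtain ⟨p, rfl⟩ : ∃ p, m = p + 1 := ⟨m - 1, by omega⟩
      have hc : ((p.choose (k + 1) * (p + 1) : ℕ) : ℝ) =
          ((p + 1).choose (k + 1) * (p - k) : ℕ) := by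
        rw [Nat.choose_mul_succ_eq, Nat.add_sub_add_right]
      rw [show p + 1 - k = p - k + 1 by omega, H2v_succ, Nat.add_sub_add_right, Nat.add_sub_cancel,
        Nat.sub_sub]
      push_cast at hc ⊢
      linear_combination (-2 * y * H2v (p - (k + 1)) x y) * hc
  simp only [H2idxTerm, Nat.choose_succ_succ', Nat.factorial_succ,
    show m + 1 - (k + 1) = m - k by omega, show n - 1 - k = n - (k + 1) by omega]
  push_cast
  linear_combination (n.choose (k + 1) * (k + 1) * k ! * τ ^ (k + 1) * H2v (n - (k + 1)) w z) * hm
    + (m.choose k * k ! * τ ^ (k + 1) * H2v (m - k) x y * H2v (n - (k + 1)) w z) * hn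

lemma H2idx_succ_left (m n : ℕ) (x y w z τ : ℝ) :
    H2idx (m + 1) n x y w z τ =
      x * H2idx m n x y w z τ + 2 * y * m * H2idx (m - 1) n x y w z τ +
        τ * n * H2idx m (n - 1) x y w z τ := by
  rw [H2idx_eq_sum_range (N := m + 2) (by omega),
    H2idx_eq_sum_range (m := m) (N := m + 2) (by omega),
    H2idx_eq_sum_range (m := m - 1) (N := m + 2) (by omega),
    H2idx_eq_sum_range (m := m) (n := n - 1) (N := m + 1) (by omega),
    sum_range_succ', sum_range_succ' _ (m + 1), sum_range_succ' _ (m + 1),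
    sum_congr rfl fun k _ => H2idxTerm_succ_succ m n k x y w z τ, H2idxTerm_succ_zero,
    sum_add_distrib, sum_add_distrib, ← mul_sum, ← mul_sum, ← mul_sum]
  ring

lemma H2idx_zero_left (n : ℕ) (x y w z τ : ℝ) : H2idx 0 n x y w z τ = H2v n w z := by
  have h₀ : H2v 0 x y = 1 := by simp [H2v]
  simp only [H2idx, min_eq_left n.zero_le, zero_add, sum_range_one, Nat.sub_zero, h₀,
    Nat.factorial_zero, Nat.cast_one]
  field_simp

theorem eq_of_two_index_recurrence {R : Type*} [Semiring R] {u v : ℕ → ℕ → R} {x y w z τ : R}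
    (h₀ : u 0 0 = v 0 0)
    (hu : ∀ m n, u (m + 1) n = x * u m n + y * m * u (m - 1) n + τ * n * u m (n - 1))
    (hv : ∀ m n, v (m + 1) n = x * v m n + y * m * v (m - 1) n + τ * n * v m (n - 1))
    (hu₀ : ∀ n, u 0 (n + 1) = w * u 0 n + z * n * u 0 (n - 1))
    (hv₀ : ∀ n, v 0 (n + 1) = w * v 0 n + z * n * v 0 (n - 1)) :
    u = v := by
  suffices h : ∀ s m n, m + n ≤ s → u m n = v m n from
    funext₂ fun m n => h _ m n le_rfl
  intro s
  induction s with
  | zero =>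
    intro m n h
    obtain ⟨rfl, rfl⟩ : m = 0 ∧ n = 0 := by omega
    exact h₀
  | succ s ih =>
    rintro (_ | m) n h
    · rcases n with _ | n
      · exact h₀
      · rw [hu₀, hv₀, ih 0 n (by omega), ih 0 (n - 1) (by omega)]
    · simp only [hu, hv, ih m n (by omega), ih (m - 1) n (by omega), ih m (n - 1) (by omega)]

section GaussianIntegrals

variable {α : ℝ}

theorem integrable_eval_mul_exp_neg_mul_sq (hα : 0 < α) (p : Polynomial ℝ) :
    Integrable fun x => p.eval x * exp (-α * x ^ 2) := by
  simp_rw [Polynomial.eval_eq_sum_range, sum_mul, mul_assoc]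
  refine integrable_finsetSum _ fun i _ => Integrable.const_mul ?_ _
  simpa using integrable_rpow_mul_exp_neg_mul_sq hα (s := i) (by linarith [i.cast_nonneg (α := ℝ)])

theorem integral_mul_mul_exp_neg_mul_sq (hα : α ≠ 0) {u u' : ℝ → ℝ}
    (hu : ∀ x, HasDerivAt u (u' x) x) (hu_int : Integrable fun x => u x * exp (-α * x ^ 2))
    (hu'_int : Integrable fun x => u' x * exp (-α * x ^ 2))
    (hxu_int : Integrable fun x => x * u x * exp (-α * x ^ 2)) :
    ∫ x, x * u x * exp (-α * x ^ 2) = (∫ x, u' x * exp (-α * x ^ 2)) / (2 * α) := by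
  have hderiv : ∀ x, HasDerivAt (fun x => u x * exp (-α * x ^ 2))
      (u' x * exp (-α * x ^ 2) - 2 * α * (x * u x * exp (-α * x ^ 2))) x := fun x => by
    have hexp := ((hasDerivAt_pow 2 x).const_mul (-α)).exp
    exact ((hu x).mul hexp).congr_deriv (by push_cast; ring)
  have h := integral_eq_zero_of_hasDerivAt_of_integrable hderiv
    (hu'_int.sub (hxu_int.const_mul _)) hu_int
  rw [integral_sub hu'_int (hxu_int.const_mul _), integral_const_mul] at h
  rw [eq_div_iff (mul_ne_zero two_ne_zero hα)]
  linarith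

theorem integral_linear_pow_succ_mul_linear_pow_mul_exp (hα : 0 < α) (a b f g : ℝ) (m n : ℕ) :
    ∫ x, (a * x + b) ^ (m + 1) * (f * x + g) ^ n * exp (-α * x ^ 2) =
      b * (∫ x, (a * x + b) ^ m * (f * x + g) ^ n * exp (-α * x ^ 2)) +
        2 * (a ^ 2 / (4 * α)) * m *
          (∫ x, (a * x + b) ^ (m - 1) * (f * x + g) ^ n * exp (-α * x ^ 2)) +
        a * f / (2 * α) * n * ∫ x, (a * x + b) ^ m * (f * x + g) ^ (n - 1) * exp (-α * x ^ 2) := by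
  have hintegrable : ∀ k i j,
      Integrable fun x => x ^ k * ((a * x + b) ^ i * (f * x + g) ^ j) * exp (-α * x ^ 2) :=
    fun k i j => by
      simpa using integrable_eval_mul_exp_neg_mul_sq hα
        (.X ^ k * ((.C a * .X + .C b) ^ i * (.C f * .X + .C g) ^ j))
  have hintegrable₀ : ∀ i j,
      Integrable fun x => (a * x + b) ^ i * (f * x + g) ^ j * exp (-α * x ^ 2) :=
    fun i j => by simpa using hintegrable 0 i j
  have hlin : ∀ c d x, HasDerivAt (fun t : ℝ => c * t + d) c x := fun c d x => by
    simpa using ((hasDerivAt_id x).const_mul c).add_const d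
  have hderiv : ∀ x, HasDerivAt (fun x => (a * x + b) ^ m * (f * x + g) ^ n)
      (a * m * ((a * x + b) ^ (m - 1) * (f * x + g) ^ n) +
        f * n * ((a * x + b) ^ m * (f * x + g) ^ (n - 1))) x := fun x =>
    (((hlin a b x).pow m).mul ((hlin f g x).pow n)).congr_deriv (by simp only [Pi.pow_apply]; ring)
  have hxu : Integrable fun x => x * ((a * x + b) ^ m * (f * x + g) ^ n) * exp (-α * x ^ 2) := by
    simpa using hintegrable 1 m n
  have hibp := integral_mul_mul_exp_neg_mul_sq hα.ne' hderiv (hintegrable₀ m n)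
    (((hintegrable₀ (m - 1) n).const_mul (a * m)).add ((hintegrable₀ m (n - 1)).const_mul (f * n))
      |>.congr (.of_forall fun x => by simp only [Pi.add_apply]; ring)) hxu
  have hsplit : ∫ x, (a * x + b) ^ (m + 1) * (f * x + g) ^ n * exp (-α * x ^ 2) =
      a * (∫ x, x * ((a * x + b) ^ m * (f * x + g) ^ n) * exp (-α * x ^ 2)) +
        b * ∫ x, (a * x + b) ^ m * (f * x + g) ^ n * exp (-α * x ^ 2) := by
    rw [← integral_const_mul, ← integral_const_mul,
      ← integral_add (hxu.const_mul a) ((hintegrable₀ m n).const_mul b)]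
    congr with x
    ring
  have hderiv_int : ∫ x, (a * m * ((a * x + b) ^ (m - 1) * (f * x + g) ^ n) +
        f * n * ((a * x + b) ^ m * (f * x + g) ^ (n - 1))) * exp (-α * x ^ 2) =
      a * m * (∫ x, (a * x + b) ^ (m - 1) * (f * x + g) ^ n * exp (-α * x ^ 2)) +
        f * n * ∫ x, (a * x + b) ^ m * (f * x + g) ^ (n - 1) * exp (-α * x ^ 2) := by
    rw [← integral_const_mul, ← integral_const_mul,
      ← integral_add ((hintegrable₀ (m - 1) n).const_mul _)
        ((hintegrable₀ m (n - 1)).const_mul _)]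
    congr with x
    ring
  rw [hsplit, hibp, hderiv_int]
  ring

end GaussianIntegrals

theorem gaussian_integral_two_binomials (m n : ℕ) (a b f g α : ℝ) (hα : 0 < α) :
    ∫ x : ℝ, (a * x + b) ^ m * (f * x + g) ^ n * Real.exp (-α * x ^ 2) =
      Real.sqrt (π / α) *
        H2idx m n b (a ^ 2 / (4 * α)) g (f ^ 2 / (4 * α)) (a * f / (2 * α)) := by
  have hrec := eq_of_two_index_recurrence
    (u := fun m n => ∫ x, (a * x + b) ^ m * (f * x + g) ^ n * exp (-α * x ^ 2))
    (v := fun m n =>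
      √(π / α) * H2idx m n b (a ^ 2 / (4 * α)) g (f ^ 2 / (4 * α)) (a * f / (2 * α)))
    (x := b) (y := 2 * (a ^ 2 / (4 * α))) (w := g) (z := 2 * (f ^ 2 / (4 * α)))
    (τ := a * f / (2 * α)) ?_ (integral_linear_pow_succ_mul_linear_pow_mul_exp hα a b f g) ?_ ?_ ?_
  · exact congrFun₂ hrec m n
  · simpa [H2idx_zero_left, H2v] using integral_gaussian α
  · intro m n
    simp only [H2idx_succ_left]
    ring
  · intro n
    simpa using integral_linear_pow_succ_mul_linear_pow_mul_exp hα f g a b n 0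
  · intro n
    simp only [H2idx_zero_left, H2v_succ]
    ring
end

section
/- For every real α ≥ 0, real x, and real t, the generating function identity ∑_{n=0}^∞ (t^n/n!) Q_n^{(α)}(x,y) = exp(x t) · W_α(y t² | 2) holds, where W_α(x|2) = ∑_{k=0}^∞ x^k / (k! Γ(2k+α+1)) is the second-order Bessel-Wright function. -/
open Real MeasureTheory Finset Nat

/-- The polynomials `Q_n^{(ν)}(x,y)`. -/
noncomputable def Qpoly (ν : ℝ) (n : ℕ) (x y : ℝ) : ℝ :=
  (n ! : ℝ) * ∑ k ∈ Finset.range (n / 2 + 1),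
    x ^ (n - 2 * k) * y ^ k /
      (((n - 2 * k)! : ℝ) * (k ! : ℝ) * Real.Gamma (2 * k + ν + 1))

/-- Second-order Bessel-Wright function . -/
noncomputable def BesselWright2 (α x : ℝ) : ℝ :=
  ∑' k : ℕ, x ^ k / ((k ! : ℝ) * Real.Gamma (2 * k + α + 1))

/-!
The right-hand side is the product of two absolutely convergent series, hence the double series
`∑_{m,k} (xt)^m / m! · (yt²)^k / (k! Γ(2k+α+1))`. Grouping its terms by `n = m + 2k` gives,
in degree `n`, exactly `tⁿ/n! · Q_n^{(α)}(x,y)`.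
-/

lemma Real.Gamma_le_Gamma_add_nat {a : ℝ} (ha : 1 ≤ a) (n : ℕ) :
    Gamma a ≤ Gamma (a + n) := by
  induction n with
  | zero => simp
  | succ n ih =>
    have hpos : 0 < a + n := by positivity
    calc Gamma a ≤ Gamma (a + n) := ih
      _ ≤ (a + n) * Gamma (a + n) := by
        nlinarith [Gamma_pos_of_pos hpos, (Nat.cast_nonneg n : (0 : ℝ) ≤ n)]
      _ = Gamma (a + (n + 1 : ℕ)) := by
        rw [← Gamma_add_one hpos.ne']
        push_cast
        ring_nf

lemma summable_abs_besselWright2_term {α : ℝ} (hα : 0 ≤ α) (z : ℝ) :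
    Summable fun k : ℕ => |z ^ k / ((k ! : ℝ) * Gamma (2 * k + α + 1))| := by
  refine Summable.of_nonneg_of_le (fun k => abs_nonneg _) (fun k => ?_)
    ((Real.summable_pow_div_factorial |z|).div_const (Gamma (α + 1)))
  have hGamma : Gamma (α + 1) ≤ Gamma (2 * k + α + 1) := by
    convert Gamma_le_Gamma_add_nat (a := α + 1) (by linarith) (2 * k) using 2
    push_cast
    ring
  have hpos : 0 < (k ! : ℝ) * Gamma (2 * k + α + 1) :=
    mul_pos (by positivity) ((Gamma_pos_of_pos (by linarith)).trans_le hGamma)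
  rw [abs_div, abs_pow, abs_of_pos hpos, div_div]
  gcongr

lemma hasSum_besselWright2 {α : ℝ} (hα : 0 ≤ α) (z : ℝ) :
    HasSum (fun k : ℕ => z ^ k / ((k ! : ℝ) * Gamma (2 * k + α + 1))) (BesselWright2 α z) :=
  (summable_abs_besselWright2_term hα z).of_abs.hasSum

def sigmaFinHalfEquivProd : (Σ n : ℕ, Fin (n / 2 + 1)) ≃ ℕ × ℕ where
  toFun p := (p.1 - 2 * p.2, p.2)
  invFun q := ⟨q.1 + 2 * q.2, ⟨q.2, by omega⟩⟩
  left_inv := by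
    rintro ⟨n, k, hk⟩
    exact Sigma.ext (by dsimp only; omega) ((Fin.heq_ext_iff (by dsimp only; omega)).2 rfl)
  right_inv := by
    rintro ⟨m, k⟩
    simp

lemma HasSum.sum_range_half {M : Type*} [AddCommMonoid M] [TopologicalSpace M] [ContinuousAdd M]
    [RegularSpace M] {f : ℕ × ℕ → M} {a : M} (hf : HasSum f a) :
    HasSum (fun n => ∑ k ∈ range (n / 2 + 1), f (n - 2 * k, k)) a := by
  refine (sigmaFinHalfEquivProd.hasSum_iff.2 hf).sigma fun n => ?_
  rw [← Fin.sum_univ_eq_sum_range (fun k => f (n - 2 * k, k))]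
  exact hasSum_fintype _

lemma pow_div_factorial_mul_Qpoly (α : ℝ) (n : ℕ) (x y t : ℝ) :
    t ^ n / (n ! : ℝ) * Qpoly α n x y =
      ∑ k ∈ range (n / 2 + 1), (x * t) ^ (n - 2 * k) / ((n - 2 * k)! : ℝ) *
        ((y * t ^ 2) ^ k / ((k ! : ℝ) * Gamma (2 * k + α + 1))) := by
  rw [Qpoly, ← mul_assoc, div_mul_cancel₀ _ (by positivity), mul_sum]
  refine sum_congr rfl fun k hk => ?_
  have ht : t ^ n = t ^ (n - 2 * k) * (t ^ 2) ^ k := by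
    rw [← pow_mul, ← pow_add, Nat.sub_add_cancel (by rw [mem_range] at hk; omega)]
  rw [mul_pow, mul_pow, ht]
  ring

theorem Qpoly_generating_function (α : ℝ) (hα : 0 ≤ α) (x y t : ℝ) :
    HasSum (fun n : ℕ => t ^ n / (n ! : ℝ) * Qpoly α n x y)
      (Real.exp (x * t) * BesselWright2 α (y * t ^ 2)) := by
  have hexp : HasSum (fun m : ℕ => (x * t) ^ m / (m ! : ℝ)) (exp (x * t)) := by
    rw [exp_eq_exp_ℝ]
    exact NormedSpace.expSeries_div_hasSum_exp _
  have hprod := hexp.mul (hasSum_besselWright2 hα (y * t ^ 2)) <|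
    summable_mul_of_summable_norm (hexp.summable.abs.congr fun _ => (norm_eq_abs _).symm)
      ((summable_abs_besselWright2_term hα _).congr fun _ => (norm_eq_abs _).symm)
  simp only [pow_div_factorial_mul_Qpoly]
  exact hprod.sum_range_half
end
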